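/- Let ψ: ℕ → (0,∞) be almost decreasing with constant M (ψ(k₂) ≤ M ψ(k₁) for k₁ ≤ k₂), and suppose there is K > 0 with ψ(k)/ψ(2k) ≤ K for all k. Then for every n ∈ ℕ there is a constant C > 0 (depending only on M and K) and a function f₂ ∈ L^ψ_{β,∞} such that for every subset γ ⊂ ℤ of cardinality 2n, ‖f₂ − S_γ(f₂)‖_{L_s} ≥ C ψ(n), for any 1 ≤ s < ∞ and β ∈ ℝ. Consequently e^⊥_{2n}(L^ψ_{β,∞})_s ≥ C ψ(n). -/

import Mathlib

/-!
The test function is a Rudin–Shapiro polynomial on the frequencies `±1, …, ±2^m`, where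
`2n ≤ 2^m ≤ 4n`, with coefficients weighted by `ψ(|k|)` and rotated by `e^{∓iβπ/2}`. Undoing the
weights and the rotation leaves a multiple of the Rudin–Shapiro polynomial itself, whose sup norm
is `O(2^{m/2})` since `|P|² + |Q|² = 2^{m+1}` on the circle; so the function lies in
`L^ψ_{β,∞}`. Deleting `2n` frequencies leaves at least `2^m`, and pairing the remainder with the
unweighted rotated polynomial bounds its `L₁` norm below by `∑ ψ(|k|) / 2^m`. Almost monotonicity
and doubling give `ψ(|k|) ≥ ψ(n) / (M K²)` for `|k| ≤ 4n`, and `L₁ ≤ L_s` up to `2π`.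
-/

open MeasureTheory Real Complex Finset
open scoped ENNReal

/-- The `k`-th Fourier coefficient of a `2π`-periodic function. -/
noncomputable def fourierCoef (f : ℝ → ℂ) (k : ℤ) : ℂ :=
  (1 / (2 * π)) * ∫ t in (-π)..π, f t * Complex.exp (-Complex.I * k * t)

/-- Membership in the class `L^ψ_{β,∞}`. -/
def LpsiClass (ψ : ℕ → ℝ) (β : ℝ) (f : ℝ → ℝ) : Prop :=
  (∀ t, f (t + 2 * π) = f t) ∧ IntervalIntegrable f volume (-π) π ∧
  ∃ g : ℝ → ℝ, (∀ t, g (t + 2 * π) = g t) ∧ IntervalIntegrable g volume (-π) π ∧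
    (∀ᵐ t : ℝ, |g t| ≤ 1) ∧
    fourierCoef (fun t => (g t : ℂ)) 0 = 0 ∧
    ∀ k : ℤ, k ≠ 0 →
      fourierCoef (fun t => (g t : ℂ)) k
        = (fourierCoef (fun t => (f t : ℂ)) k / (ψ k.natAbs : ℂ)) *
            Complex.exp (Complex.I * (β * π / 2) * (k.sign : ℤ))

/-- Best orthogonal trigonometric approximation of width `m` of the class `L^ψ_{β,∞}`
in the metric of `L_s`. -/
noncomputable def eBotClass (ψ : ℕ → ℝ) (β : ℝ) (m : ℕ) (s : ℝ≥0∞) : ℝ≥0∞ :=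
  ⨆ f : {f : ℝ → ℝ // LpsiClass ψ β f},
    ⨅ γ : {γ : Finset ℤ // γ.card = m},
      eLpNorm
        (fun t : ℝ => (f.1 t : ℂ) -
          ∑ k ∈ γ.1, fourierCoef (fun t => (f.1 t : ℂ)) k * Complex.exp (Complex.I * k * t))
        s (volume.restrict (Set.Ioc (0 : ℝ) (2 * π)))

open ComplexConjugate

noncomputable def trigPoly (S : Finset ℤ) (c : ℤ → ℂ) (t : ℝ) : ℂ :=
  ∑ k ∈ S, c k * exp (I * k * t)

section TrigPoly

variable {S : Finset ℤ} {c : ℤ → ℂ}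

@[fun_prop]
lemma continuous_trigPoly : Continuous (trigPoly S c) := by
  unfold trigPoly; fun_prop

lemma exp_int_mul_add_two_pi (k : ℤ) (t : ℝ) :
    exp (I * k * ((t + 2 * π : ℝ) : ℂ)) = exp (I * k * t) := by
  rw [show I * k * ((t + 2 * π : ℝ) : ℂ) = I * k * t + k * (2 * π * I) by push_cast; ring,
    Complex.exp_add, Complex.exp_int_mul_two_pi_mul_I, mul_one]

lemma periodic_trigPoly : Function.Periodic (trigPoly S c) (2 * π) := fun t =>
  Finset.sum_congr rfl fun k _ => by rw [exp_int_mul_add_two_pi]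

lemma integral_exp_int_mul (m : ℤ) (a : ℝ) :
    ∫ t in a..a + 2 * π, exp (I * m * t) = if m = 0 then (2 * π : ℂ) else 0 := by
  split_ifs with hm
  · simp [hm]
  · have hc : I * m ≠ 0 := by simp [hm]
    rw [integral_exp_mul_complex hc, exp_int_mul_add_two_pi, sub_self, zero_div]

lemma integral_trigPoly_mul_exp (a : ℝ) (l : ℤ) :
    ∫ t in a..a + 2 * π, trigPoly S c t * exp (-I * l * t)
      = if l ∈ S then 2 * π * c l else 0 := by
  have hexp : ∀ (k : ℤ) (t : ℝ), c k * exp (I * k * t) * exp (-I * l * t)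
      = c k * exp (I * (k - l : ℤ) * t) :=
    fun k t => by rw [mul_assoc, ← Complex.exp_add]; push_cast; ring_nf
  simp only [trigPoly, Finset.sum_mul, hexp]
  rw [intervalIntegral.integral_finsetSum fun k _ =>
    (by fun_prop : Continuous _).intervalIntegrable _ _]
  simp only [intervalIntegral.integral_const_mul, integral_exp_int_mul, sub_eq_zero, mul_ite,
    mul_zero, Finset.sum_ite_eq']
  split_ifs <;> ring

lemma fourierCoef_trigPoly (l : ℤ) :
    fourierCoef (trigPoly S c) l = if l ∈ S then c l else 0 := by
  have h := integral_trigPoly_mul_exp (S := S) (c := c) (-π) l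
  rw [show -π + 2 * π = π by ring] at h
  have hπ : (π : ℂ) ≠ 0 := by exact_mod_cast Real.pi_ne_zero
  rw [fourierCoef, h]
  split_ifs
  · field_simp
  · simp

lemma integral_trigPoly_mul_conj {A B : Finset ℤ} (hAB : A ⊆ B) (d : ℤ → ℂ) :
    ∫ t in (0 : ℝ)..2 * π, trigPoly A c t * conj (trigPoly B d t)
      = 2 * π * ∑ k ∈ A, c k * conj (d k) := by
  have hconj : ∀ t : ℝ, trigPoly A c t * conj (trigPoly B d t)
      = ∑ l ∈ B, conj (d l) * (trigPoly A c t * exp (-I * l * t)) := by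
    intro t
    rw [show trigPoly B d t = ∑ l ∈ B, d l * exp (I * l * t) from rfl, map_sum, Finset.mul_sum]
    refine Finset.sum_congr rfl fun l _ => ?_
    rw [map_mul, ← Complex.exp_conj]
    simp only [map_mul, Complex.conj_I, map_intCast, Complex.conj_ofReal]
    ring_nf
  simp only [hconj]
  rw [intervalIntegral.integral_finsetSum fun l _ =>
    (by fun_prop : Continuous _).intervalIntegrable _ _]
  have h := fun l => integral_trigPoly_mul_exp (S := A) (c := c) 0 l
  simp only [zero_add] at h
  simp only [intervalIntegral.integral_const_mul, h, mul_ite, mul_zero, Finset.sum_ite_mem,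
    Finset.inter_eq_right.mpr hAB, Finset.mul_sum]
  exact Finset.sum_congr rfl fun k _ => by ring

end TrigPoly

def freqs (N : ℕ) : Finset ℤ :=
  (range N).image (fun j : ℕ => (j + 1 : ℤ)) ∪ (range N).image (fun j : ℕ => -(j + 1 : ℤ))

section Freqs

variable {N : ℕ}

lemma sum_freqs {A : Type*} [AddCommMonoid A] (F : ℤ → A) :
    ∑ k ∈ freqs N, F k = ∑ j ∈ range N, (F (j + 1) + F (-(j + 1))) := by
  have hdisj : Disjoint ((range N).image (fun j : ℕ => (j + 1 : ℤ)))
      ((range N).image (fun j : ℕ => -(j + 1 : ℤ))) := by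
    simp only [Finset.disjoint_left, Finset.mem_image]
    rintro _ ⟨i, -, rfl⟩ ⟨j, -, h⟩
    omega
  rw [freqs, Finset.sum_union hdisj, Finset.sum_image (fun i _ j _ h => by simpa using h),
    Finset.sum_image (fun i _ j _ h => by simpa using h), Finset.sum_add_distrib]

lemma card_freqs : (freqs N).card = 2 * N := by
  rw [Finset.card_eq_sum_ones, sum_freqs]
  simp [mul_comm]

lemma natAbs_pos_and_le_of_mem_freqs {k : ℤ} (hk : k ∈ freqs N) :
    0 < k.natAbs ∧ k.natAbs ≤ N := by
  simp only [freqs, Finset.mem_union, Finset.mem_image, Finset.mem_range] at hk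
  rcases hk with ⟨j, hj, rfl⟩ | ⟨j, hj, rfl⟩ <;> omega

variable {c : ℤ → ℂ}

lemma trigPoly_freqs_eq_re (hc : ∀ k, c (-k) = conj (c k)) (t : ℝ) :
    trigPoly (freqs N) c t
      = ((2 * (∑ j ∈ range N, c (j + 1) * exp (I * (j + 1 : ℤ) * t)).re : ℝ) : ℂ) := by
  rw [← Complex.add_conj, trigPoly, sum_freqs, Finset.sum_add_distrib, map_sum]
  congr 1
  refine Finset.sum_congr rfl fun j _ => ?_
  rw [hc, map_mul, ← Complex.exp_conj]
  simp only [map_mul, Complex.conj_I, map_intCast, Complex.conj_ofReal]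
  push_cast
  ring_nf

lemma ofReal_re_trigPoly_freqs (hc : ∀ k, c (-k) = conj (c k)) (t : ℝ) :
    ((trigPoly (freqs N) c t).re : ℂ) = trigPoly (freqs N) c t := by
  rw [trigPoly_freqs_eq_re hc, Complex.ofReal_re]

lemma norm_trigPoly_freqs_le (hc : ∀ k, c (-k) = conj (c k)) (t : ℝ) :
    ‖trigPoly (freqs N) c t‖ ≤ 2 * ‖∑ j ∈ range N, c (j + 1) * exp (I * (j + 1 : ℤ) * t)‖ := by
  rw [trigPoly_freqs_eq_re hc, Complex.norm_real, Real.norm_eq_abs, abs_mul, abs_two]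
  gcongr
  exact Complex.abs_re_le_norm _

end Freqs

noncomputable def rudinShapiro : ℕ → (ℕ → ℝ) × (ℕ → ℝ)
  | 0 => (1, 1)
  | m + 1 =>
    (fun j => if j < 2 ^ m then (rudinShapiro m).1 j else (rudinShapiro m).2 (j - 2 ^ m),
     fun j => if j < 2 ^ m then (rudinShapiro m).1 j else -(rudinShapiro m).2 (j - 2 ^ m))

lemma rudinShapiro_sq (m j : ℕ) :
    (rudinShapiro m).1 j ^ 2 = 1 ∧ (rudinShapiro m).2 j ^ 2 = 1 := by
  induction m generalizing j with
  | zero => simp [rudinShapiro]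
  | succ m ih =>
    simp only [rudinShapiro]
    split_ifs
    · exact ⟨(ih j).1, (ih j).1⟩
    · simpa using (ih (j - 2 ^ m)).2

lemma rudinShapiro_norm_sq_add_norm_sq {z : ℂ} (hz : ‖z‖ = 1) (m : ℕ) :
    ‖∑ j ∈ range (2 ^ m), (rudinShapiro m).1 j * z ^ j‖ ^ 2
      + ‖∑ j ∈ range (2 ^ m), (rudinShapiro m).2 j * z ^ j‖ ^ 2 = 2 ^ (m + 1) := by
  induction m with
  | zero => simp [rudinShapiro]; norm_num
  | succ m ih =>
    set P := ∑ j ∈ range (2 ^ m), (rudinShapiro m).1 j * z ^ j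
    set Q := ∑ j ∈ range (2 ^ m), (rudinShapiro m).2 j * z ^ j
    have hsplit : ∀ ε : ℝ, ∑ j ∈ range (2 ^ (m + 1)),
        ((if j < 2 ^ m then (rudinShapiro m).1 j else ε * (rudinShapiro m).2 (j - 2 ^ m) : ℝ)
          : ℂ) * z ^ j = P + ε * (z ^ 2 ^ m * Q) := by
      intro ε
      rw [pow_succ, mul_two, Finset.sum_range_add, Finset.mul_sum, Finset.mul_sum]
      congr 1
      · exact Finset.sum_congr rfl fun j hj => by simp [Finset.mem_range.mp hj]
      · refine Finset.sum_congr rfl fun j _ => ?_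
        simp only [add_lt_iff_neg_left, not_lt_zero, if_false, add_tsub_cancel_left, pow_add]
        push_cast
        ring
    have hP := hsplit 1
    have hQ := hsplit (-1)
    simp only [one_mul, neg_one_mul, Complex.ofReal_one, Complex.ofReal_neg] at hP hQ
    simp only [rudinShapiro, hP, hQ, ← sub_eq_add_neg, parallelogram_law_with_norm ℂ, norm_mul,
      norm_pow, hz, one_pow, one_mul, ih]
    ring

lemma norm_rudinShapiro_le {z : ℂ} (hz : ‖z‖ = 1) (m : ℕ) :
    ‖∑ j ∈ range (2 ^ m), (rudinShapiro m).1 j * z ^ j‖ ≤ √(2 ^ (m + 1)) :=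
  (Real.le_sqrt (norm_nonneg _) (by positivity)).mpr <| by
    nlinarith [rudinShapiro_norm_sq_add_norm_sq hz m,
      sq_nonneg ‖∑ j ∈ range (2 ^ m), (rudinShapiro m).2 j * z ^ j‖]

-- The frequencies `±1, …, ±2^m` carry the Rudin–Shapiro signs `ξ₀, …, ξ_{2^m - 1}`, normalised
-- so that the resulting trigonometric polynomial has sup norm at most `1`.
noncomputable def rsCoef (m : ℕ) (θ : ℝ) (k : ℤ) : ℂ :=
  (2 * √(2 ^ (m + 1)))⁻¹ * (rudinShapiro m).1 (k.natAbs - 1) * exp (-(I * θ * k.sign))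

section RsCoef

variable {m : ℕ} {θ : ℝ}

lemma rsCoef_neg (k : ℤ) : rsCoef m θ (-k) = conj (rsCoef m θ k) := by
  simp only [rsCoef, map_mul, ← Complex.exp_conj, map_neg, Complex.conj_I, map_intCast,
    Complex.conj_ofReal, Int.natAbs_neg, Int.sign_neg]
  push_cast
  ring_nf

lemma rsCoef_mul_exp (k : ℤ) : rsCoef m θ k * exp (I * θ * k.sign) = rsCoef m 0 k := by
  simp [rsCoef, mul_assoc, ← Complex.exp_add]

lemma normSq_rsCoef (k : ℤ) : normSq (rsCoef m θ k) = (8 * 2 ^ m)⁻¹ := by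
  have hexp : normSq (exp (-(I * θ * k.sign))) = 1 := by
    rw [Complex.normSq_eq_norm_sq, show -(I * θ * k.sign) = ((-(θ * k.sign) : ℝ) : ℂ) * I by
      push_cast; ring, Complex.norm_exp_ofReal_mul_I, one_pow]
  rw [rsCoef, map_mul, map_mul, hexp, mul_one, Complex.normSq_ofReal, Complex.normSq_ofReal,
    ← sq, ← sq, (rudinShapiro_sq m _).1, mul_one]
  rw [inv_pow, mul_pow, Real.sq_sqrt (by positivity), pow_succ]
  ring

lemma norm_trigPoly_rsCoef_le_one (t : ℝ) : ‖trigPoly (freqs (2 ^ m)) (rsCoef m θ) t‖ ≤ 1 := by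
  set z := exp (I * t)
  have hz : ‖z‖ = 1 := by
    rw [Complex.norm_exp]; simp
  have hterm : ∀ j : ℕ, rsCoef m θ (j + 1) * exp (I * (j + 1 : ℤ) * t)
      = (((2 * √(2 ^ (m + 1)))⁻¹ : ℝ) * exp (-(I * θ)) * z) * ((rudinShapiro m).1 j * z ^ j) := by
    intro j
    have hsign : ((j : ℤ) + 1).sign = 1 := Int.sign_eq_one_of_pos (by omega)
    have hexp : exp (I * (j + 1 : ℤ) * t) = z * z ^ j := by
      rw [← Complex.exp_nat_mul, ← Complex.exp_add]; push_cast; ring_nf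
    rw [rsCoef, hsign, hexp, show ((j : ℤ) + 1).natAbs - 1 = j by omega]
    push_cast
    ring_nf
  have hnorm : ‖(((2 * √(2 ^ (m + 1)))⁻¹ : ℝ) : ℂ) * exp (-(I * θ)) * z‖
      = (2 * √(2 ^ (m + 1)))⁻¹ := by
    rw [norm_mul, norm_mul, hz, show -(I * θ) = ((-θ : ℝ) : ℂ) * I by push_cast; ring,
      Complex.norm_exp_ofReal_mul_I, Complex.norm_real, Real.norm_of_nonneg (by positivity), mul_one, mul_one]
  calc ‖trigPoly (freqs (2 ^ m)) (rsCoef m θ) t‖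
      ≤ 2 * ‖∑ j ∈ range (2 ^ m), rsCoef m θ (j + 1) * exp (I * (j + 1 : ℤ) * t)‖ :=
        norm_trigPoly_freqs_le rsCoef_neg t
    _ = 2 * ((2 * √(2 ^ (m + 1)))⁻¹ * ‖∑ j ∈ range (2 ^ m), (rudinShapiro m).1 j * z ^ j‖) := by
        rw [Finset.sum_congr rfl fun j _ => hterm j, ← Finset.mul_sum, norm_mul, hnorm]
    _ ≤ 2 * ((2 * √(2 ^ (m + 1)))⁻¹ * √(2 ^ (m + 1))) := by
        gcongr; exact norm_rudinShapiro_le hz m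
    _ = 1 := by field_simp

end RsCoef

lemma norm_integral_mul_conj_le {u h : ℝ → ℂ} {a b : ℝ} (hab : a ≤ b) (hu : Continuous u)
    (hh : Continuous h) (hh_le : ∀ t, ‖h t‖ ≤ 1) :
    ‖∫ t in a..b, u t * conj (h t)‖ ≤ ∫ t in a..b, ‖u t‖ := by
  refine (intervalIntegral.norm_integral_le_integral_norm hab).trans <|
    intervalIntegral.integral_mono_on hab
      ((by fun_prop : Continuous fun t => ‖u t * conj (h t)‖).intervalIntegrable _ _)
      (hu.norm.intervalIntegrable _ _) fun t _ => ?_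
  rw [norm_mul, Complex.norm_conj]
  exact mul_le_of_le_one_right (norm_nonneg _) (hh_le t)

noncomputable def rsTestCoef (ψ : ℕ → ℝ) (β : ℝ) (m : ℕ) (k : ℤ) : ℂ :=
  ψ k.natAbs * rsCoef m (β * π / 2) k

-- The paper's `f₂`, on the frequencies `±1, …, ±2^m` instead of `|k| ≤ 2n - 1`, so that the
-- `(ψ, β)`-derivative has mean zero.
noncomputable def rsTestFun (ψ : ℕ → ℝ) (β : ℝ) (m : ℕ) (t : ℝ) : ℝ :=
  (trigPoly (freqs (2 ^ m)) (rsTestCoef ψ β m) t).re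

section RsTestFun

variable {ψ : ℕ → ℝ} {β : ℝ} {m : ℕ}

lemma rsTestCoef_neg (k : ℤ) : rsTestCoef ψ β m (-k) = conj (rsTestCoef ψ β m k) := by
  rw [rsTestCoef, rsTestCoef, rsCoef_neg, Int.natAbs_neg, map_mul, Complex.conj_ofReal]

lemma ofReal_rsTestFun :
    (fun t => (rsTestFun ψ β m t : ℂ)) = trigPoly (freqs (2 ^ m)) (rsTestCoef ψ β m) :=
  funext <| ofReal_re_trigPoly_freqs rsTestCoef_neg

lemma lpsiClass_rsTestFun (hψ : ∀ k, ψ k ≠ 0) : LpsiClass ψ β (rsTestFun ψ β m) := by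
  have hg := funext <| ofReal_re_trigPoly_freqs (N := 2 ^ m) (rsCoef_neg (m := m) (θ := 0))
  refine ⟨fun t => congrArg Complex.re (periodic_trigPoly t),
    (Complex.continuous_re.comp continuous_trigPoly).intervalIntegrable _ _,
    fun t => (trigPoly (freqs (2 ^ m)) (rsCoef m 0) t).re,
    fun t => congrArg Complex.re (periodic_trigPoly t),
    (Complex.continuous_re.comp continuous_trigPoly).intervalIntegrable _ _,
    ae_of_all _ fun t => (Complex.abs_re_le_norm _).trans (norm_trigPoly_rsCoef_le_one t), ?_,
    fun k hk => ?_⟩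
  · rw [hg, fourierCoef_trigPoly,
      if_neg fun h => (natAbs_pos_and_le_of_mem_freqs h).1.ne' rfl]
  · rw [hg, ofReal_rsTestFun, fourierCoef_trigPoly, fourierCoef_trigPoly]
    split_ifs
    · rw [rsTestCoef, mul_div_cancel_left₀ _ (Complex.ofReal_ne_zero.mpr (hψ _)),
        ← rsCoef_mul_exp (θ := β * π / 2)]
      push_cast
      ring_nf
    · simp

lemma rsTestFun_sub_partialSum (γ : Finset ℤ) :
    (fun t => (rsTestFun ψ β m t : ℂ) -
      ∑ k ∈ γ, fourierCoef (fun t => (rsTestFun ψ β m t : ℂ)) k * exp (I * k * t))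
      = trigPoly (freqs (2 ^ m) \ γ) (rsTestCoef ψ β m) := by
  funext t
  rw [ofReal_rsTestFun, congrFun ofReal_rsTestFun t]
  simp only [fourierCoef_trigPoly, ite_mul, zero_mul, Finset.sum_ite_mem, trigPoly]
  rw [← Finset.sdiff_inter_self_left, Finset.sum_sdiff_eq_sub Finset.inter_subset_left,
    Finset.inter_comm]

lemma le_integral_norm_trigPoly_rsTestCoef_sdiff (γ : Finset ℤ) :
    2 * π * ((8 * 2 ^ m)⁻¹ * ∑ k ∈ freqs (2 ^ m) \ γ, ψ k.natAbs)
      ≤ ∫ t in (0 : ℝ)..2 * π, ‖trigPoly (freqs (2 ^ m) \ γ) (rsTestCoef ψ β m) t‖ := by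
  have hpair : ∫ t in (0 : ℝ)..2 * π, trigPoly (freqs (2 ^ m) \ γ) (rsTestCoef ψ β m) t
        * conj (trigPoly (freqs (2 ^ m)) (rsCoef m (β * π / 2)) t)
      = ((2 * π * ((8 * 2 ^ m)⁻¹ * ∑ k ∈ freqs (2 ^ m) \ γ, ψ k.natAbs) : ℝ) : ℂ) := by
    simp only [integral_trigPoly_mul_conj Finset.sdiff_subset, rsTestCoef, mul_assoc,
      Complex.mul_conj, normSq_rsCoef, Finset.mul_sum]
    push_cast
    exact Finset.sum_congr rfl fun k _ => by ring
  calc _ ≤ ‖((2 * π * ((8 * 2 ^ m)⁻¹ * ∑ k ∈ freqs (2 ^ m) \ γ, ψ k.natAbs) : ℝ) : ℂ)‖ := by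
        rw [Complex.norm_real]; exact le_abs_self _
    _ ≤ _ := hpair ▸ norm_integral_mul_conj_le (by positivity) continuous_trigPoly
        continuous_trigPoly norm_trigPoly_rsCoef_le_one

end RsTestFun

lemma ofReal_integral_norm_le_eLpNorm_mul {u : ℝ → ℂ} (hu : Continuous u) {a b : ℝ}
    (hab : 1 ≤ b - a) {s : ℝ≥0∞} (hs : 1 ≤ s) :
    ENNReal.ofReal (∫ t in a..b, ‖u t‖)
      ≤ eLpNorm u s (volume.restrict (Set.Ioc a b)) * ENNReal.ofReal (b - a) := by
  set μ := volume.restrict (Set.Ioc a b)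
  have hL1 : ENNReal.ofReal (∫ t in a..b, ‖u t‖) = eLpNorm u 1 μ := by
    rw [eLpNorm_one_eq_lintegral_enorm, ← ofReal_integral_norm_eq_lintegral_enorm
      (hu.integrableOn_Ioc (μ := volume)), intervalIntegral.integral_of_le (by linarith)]
  have hμ : μ Set.univ = ENNReal.ofReal (b - a) := by
    rw [Measure.restrict_apply_univ, Real.volume_Ioc]
  have hexp : 1 / (1 : ℝ≥0∞).toReal - 1 / s.toReal ≤ 1 := by
    have : 0 ≤ 1 / s.toReal := by positivity
    rw [ENNReal.toReal_one]; linarith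
  rw [hL1]
  refine (eLpNorm_le_eLpNorm_mul_rpow_measure_univ hs hu.aestronglyMeasurable).trans ?_
  rw [hμ]
  gcongr
  calc ENNReal.ofReal (b - a) ^ (1 / (1 : ℝ≥0∞).toReal - 1 / s.toReal)
      ≤ ENNReal.ofReal (b - a) ^ (1 : ℝ) :=
        ENNReal.rpow_le_rpow_of_exponent_le (ENNReal.one_le_ofReal.mpr hab) hexp
    _ = ENNReal.ofReal (b - a) := ENNReal.rpow_one _

section Decay

variable {ψ : ℕ → ℝ} {M K : ℝ}

lemma le_mul_of_almostDecreasing_of_doubling (hpos : ∀ k, 0 < ψ k) (hK : 0 ≤ K)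
    (hdec : ∀ k₁ k₂ : ℕ, k₁ ≤ k₂ → ψ k₂ ≤ M * ψ k₁)
    (hdbl : ∀ k : ℕ, 1 ≤ k → ψ k / ψ (2 * k) ≤ K) {n k : ℕ} (hn : 1 ≤ n) (hk : k ≤ 4 * n) :
    ψ n ≤ K ^ 2 * M * ψ k := by
  have hdbl' : ∀ j : ℕ, 1 ≤ j → ψ j ≤ K * ψ (2 * j) := fun j hj =>
    (div_le_iff₀ (hpos _)).mp (hdbl j hj)
  calc ψ n ≤ K * ψ (2 * n) := hdbl' n hn
    _ ≤ K * (K * ψ (2 * (2 * n))) := by gcongr; exact hdbl' _ (by omega)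
    _ ≤ K * (K * (M * ψ k)) := by gcongr; exact hdec _ _ (by omega)
    _ = K ^ 2 * M * ψ k := by ring

lemma pow_mul_le_sum_sdiff_freqs (hpos : ∀ k, 0 < ψ k) (hK : 0 ≤ K)
    (hdec : ∀ k₁ k₂ : ℕ, k₁ ≤ k₂ → ψ k₂ ≤ M * ψ k₁)
    (hdbl : ∀ k : ℕ, 1 ≤ k → ψ k / ψ (2 * k) ≤ K) {n m : ℕ} (hn : 1 ≤ n)
    (hm₁ : 2 * n ≤ 2 ^ m) (hm₂ : 2 ^ m ≤ 4 * n) {γ : Finset ℤ} (hγ : γ.card ≤ 2 * n) :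
    2 ^ m * ψ n ≤ K ^ 2 * M * ∑ k ∈ freqs (2 ^ m) \ γ, ψ k.natAbs := by
  have hcard : 2 ^ m ≤ (freqs (2 ^ m) \ γ).card := by
    have := Finset.le_card_sdiff γ (freqs (2 ^ m))
    rw [card_freqs] at this
    omega
  have hterm : ∀ k ∈ freqs (2 ^ m) \ γ, ψ n ≤ K ^ 2 * M * ψ k.natAbs := fun k hk =>
    le_mul_of_almostDecreasing_of_doubling hpos hK hdec hdbl hn
      ((natAbs_pos_and_le_of_mem_freqs (Finset.mem_sdiff.mp hk).1).2.trans hm₂)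
  calc (2 : ℝ) ^ m * ψ n ≤ (freqs (2 ^ m) \ γ).card * ψ n := by
        gcongr
        · exact (hpos n).le
        · exact_mod_cast hcard
    _ ≤ K ^ 2 * M * ∑ k ∈ freqs (2 ^ m) \ γ, ψ k.natAbs := by
        rw [Finset.mul_sum, ← nsmul_eq_mul]
        exact Finset.card_nsmul_le_sum _ _ _ hterm

end Decay

lemma exists_two_mul_le_two_pow_le_four_mul {n : ℕ} (hn : 1 ≤ n) :
    ∃ m, 2 * n ≤ 2 ^ m ∧ 2 ^ m ≤ 4 * n := by
  refine ⟨Nat.log 2 n + 2, ?_, ?_⟩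
  · have := Nat.lt_pow_succ_log_self one_lt_two n
    rw [pow_succ] at *
    omega
  · have := Nat.pow_log_le_self 2 (by omega : n ≠ 0)
    rw [pow_add]
    omega

lemma le_eBotClass {ψ : ℕ → ℝ} {β : ℝ} {m : ℕ} {s : ℝ≥0∞} {f : ℝ → ℝ} {x : ℝ≥0∞}
    (hf : LpsiClass ψ β f)
    (h : ∀ γ : Finset ℤ, γ.card = m → x ≤ eLpNorm
      (fun t : ℝ => (f t : ℂ) -
        ∑ k ∈ γ, fourierCoef (fun t => (f t : ℂ)) k * Complex.exp (Complex.I * k * t))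
      s (volume.restrict (Set.Ioc (0 : ℝ) (2 * π)))) :
    x ≤ eBotClass ψ β m s :=
  le_iSup_of_le (⟨f, hf⟩ : {f : ℝ → ℝ // LpsiClass ψ β f}) (le_iInf fun γ => h γ.1 γ.2)

lemma ofReal_le_eLpNorm_rsTestFun_sub_partialSum {ψ : ℕ → ℝ} (hpos : ∀ k, 0 < ψ k)
    {M : ℝ} (hM : 0 < M) (hdec : ∀ k₁ k₂ : ℕ, k₁ ≤ k₂ → ψ k₂ ≤ M * ψ k₁)
    {K : ℝ} (hK : 0 < K) (hdbl : ∀ k : ℕ, 1 ≤ k → ψ k / ψ (2 * k) ≤ K) (β : ℝ)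
    {s : ℝ≥0∞} (hs : 1 ≤ s) {n m : ℕ} (hn : 1 ≤ n) (hm₁ : 2 * n ≤ 2 ^ m)
    (hm₂ : 2 ^ m ≤ 4 * n) {γ : Finset ℤ} (hγ : γ.card ≤ 2 * n) :
    ENNReal.ofReal ((8 * M * K ^ 2)⁻¹ * ψ n) ≤
      eLpNorm
        (fun t : ℝ => (rsTestFun ψ β m t : ℂ) -
          ∑ k ∈ γ, fourierCoef (fun t => (rsTestFun ψ β m t : ℂ)) k * exp (I * k * t))
        s (volume.restrict (Set.Ioc (0 : ℝ) (2 * π))) := by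
  set S := ∑ k ∈ freqs (2 ^ m) \ γ, ψ k.natAbs
  have hsum : 2 ^ m * ψ n ≤ K ^ 2 * M * S :=
    pow_mul_le_sum_sdiff_freqs hpos hK.le hdec hdbl hn hm₁ hm₂ hγ
  have hcoef : (8 * M * K ^ 2)⁻¹ * ψ n ≤ (8 * 2 ^ m)⁻¹ * S := by
    rw [← div_eq_inv_mul, ← div_eq_inv_mul, div_le_div_iff₀ (by positivity) (by positivity)]
    nlinarith
  have hL1 := ofReal_integral_norm_le_eLpNorm_mul
    (continuous_trigPoly (S := freqs (2 ^ m) \ γ) (c := rsTestCoef ψ β m))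
    (by linarith [Real.pi_gt_three] : (1 : ℝ) ≤ 2 * π - 0) hs
  rw [sub_zero] at hL1
  rw [rsTestFun_sub_partialSum, ← ENNReal.mul_le_mul_iff_left
    (ENNReal.ofReal_pos.mpr Real.two_pi_pos).ne' ENNReal.ofReal_ne_top,
    ← ENNReal.ofReal_mul (by have := hpos n; positivity)]
  refine (ENNReal.ofReal_le_ofReal ?_).trans hL1
  calc (8 * M * K ^ 2)⁻¹ * ψ n * (2 * π) ≤ 2 * π * ((8 * 2 ^ m)⁻¹ * S) := by
        rw [mul_comm]; gcongr
    _ ≤ _ := le_integral_norm_trigPoly_rsTestCoef_sdiff γ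

theorem eBot_lower_bound_general (ψ : ℕ → ℝ) (hpos : ∀ k, 0 < ψ k)
    (M : ℝ) (hM : 0 < M) (hdec : ∀ k₁ k₂ : ℕ, k₁ ≤ k₂ → ψ k₂ ≤ M * ψ k₁)
    (K : ℝ) (hK : 0 < K) (hdbl : ∀ k : ℕ, 1 ≤ k → ψ k / ψ (2 * k) ≤ K)
    (β : ℝ) (s : ℝ≥0∞) (hs1 : 1 ≤ s) :
    ∃ C : ℝ, 0 < C ∧ ∀ n : ℕ, 1 ≤ n →
      (∃ f : ℝ → ℝ, LpsiClass ψ β f ∧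
        ∀ γ : Finset ℤ, γ.card = 2 * n →
          ENNReal.ofReal (C * ψ n) ≤
            eLpNorm
              (fun t : ℝ => (f t : ℂ) -
                ∑ k ∈ γ, fourierCoef (fun t => (f t : ℂ)) k * Complex.exp (Complex.I * k * t))
              s (volume.restrict (Set.Ioc (0 : ℝ) (2 * π)))) ∧
      ENNReal.ofReal (C * ψ n) ≤ eBotClass ψ β (2 * n) s := by
  refine ⟨(8 * M * K ^ 2)⁻¹, by positivity, fun n hn => ?_⟩
  obtain ⟨m, hm₁, hm₂⟩ := exists_two_mul_le_two_pow_le_four_mul hn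
  have hf : LpsiClass ψ β (rsTestFun ψ β m) := lpsiClass_rsTestFun fun k => (hpos k).ne'
  have hbound := fun (γ : Finset ℤ) (hγ : γ.card = 2 * n) =>
    ofReal_le_eLpNorm_rsTestFun_sub_partialSum hpos hM hdec hK hdbl β hs1 hn hm₁ hm₂ hγ.le
  exact ⟨⟨rsTestFun ψ β m, hf, hbound⟩, le_eBotClass hf hbound⟩

/-- If `ψ` is positive, almost decreasing with constant `M` and satisfies
`ψ(k)/ψ(2k) ≤ K`, then there is `C > 0` such that for every `n ≥ 1` there is
`f₂ ∈ L^ψ_{β,∞}` with `‖f₂ - S_γ(f₂)‖_s ≥ C ψ(n)` for every `γ ⊂ ℤ` of cardinality `2n`;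
consequently `e^⊥_{2n}(L^ψ_{β,∞})_s ≥ C ψ(n)`. -/
theorem eBot_lower_bound (ψ : ℕ → ℝ) (hpos : ∀ k, 0 < ψ k)
    (M : ℝ) (hM : 0 < M) (hdec : ∀ k₁ k₂ : ℕ, k₁ ≤ k₂ → ψ k₂ ≤ M * ψ k₁)
    (K : ℝ) (hK : 0 < K) (hdbl : ∀ k : ℕ, 1 ≤ k → ψ k / ψ (2 * k) ≤ K)
    (β : ℝ) (s : ℝ≥0∞) (hs1 : 1 ≤ s) (hs2 : s ≠ ⊤) :
    ∃ C : ℝ, 0 < C ∧ ∀ n : ℕ, 1 ≤ n →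
      (∃ f : ℝ → ℝ, LpsiClass ψ β f ∧
        ∀ γ : Finset ℤ, γ.card = 2 * n →
          ENNReal.ofReal (C * ψ n) ≤
            eLpNorm
              (fun t : ℝ => (f t : ℂ) -
                ∑ k ∈ γ, fourierCoef (fun t => (f t : ℂ)) k * Complex.exp (Complex.I * k * t))
              s (volume.restrict (Set.Ioc (0 : ℝ) (2 * π)))) ∧
      ENNReal.ofReal (C * ψ n) ≤ eBotClass ψ β (2 * n) s :=
  eBot_lower_bound_general ψ hpos M hM hdec K hK hdbl β s hs1
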